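/- arXiv:0911.2663 — 2 statements merged into one kernel-verified Lean document; each statement's English description precedes it below -/
import Mathlib

section
/- Let f be holomorphic on a domain D ⊆ ℂ with f′ nonvanishing, let N_z(t) = f′(z)(t − f(z)) / ((1/2)f″(z)(t − f(z)) + f′(z)²), and let V(z,w) = N_z(f(z+w)) for z ∈ D and w small. Then at every point (z,w) where V is defined (i.e., z ∈ D, z+w ∈ D, and the denominator defining N_z(f(z+w)) is nonzero), one has ∂_z V − ∂_w V = −1 − (1/2) S_f(z) V², where S_f = f‴/f′ − (3/2)(f″/f′)² is the classical Schwarzian derivative of f. -/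
/-!
Write `V = A U / ((1/2) B U + A²)` with `A = f'(z)`, `B = f''(z)`, `U = f(z + w) - f(z)`. The
quotient rule makes the derivative of `V` linear in `(A', B', U')`. As `A, B` do not depend on `w`
and `∂_z U - ∂_w U = -f'(z)`, the difference `∂_z V - ∂_w V` is that derivative at
`(A', B', U') = (f'', f''', -f')`; `f'(z + w)` drops out, and the rational expression left in
`f'(z), f''(z), f'''(z), U` simplifies to `-1 - (1/2) S_f(z) V²`.
-/

noncomputable def tamanoiN (f : ℂ → ℂ) (z t : ℂ) : ℂ :=
  deriv f z * (t - f z) /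
    ((1 / 2) * iteratedDeriv 2 f z * (t - f z) + (deriv f z) ^ 2)

noncomputable def schwarzianDeriv (f : ℂ → ℂ) (z : ℂ) : ℂ :=
  iteratedDeriv 3 f z / deriv f z - (3 / 2) * (iteratedDeriv 2 f z / deriv f z) ^ 2

section

variable {𝕜 : Type*} [NontriviallyNormedField 𝕜]

theorem AnalyticAt.hasDerivAt_iteratedDeriv [CompleteSpace 𝕜] {f : 𝕜 → 𝕜} {x : 𝕜}
    (hf : AnalyticAt 𝕜 f x) (n : ℕ) :
    HasDerivAt (iteratedDeriv n f) (iteratedDeriv (n + 1) f x) x := by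
  rw [iteratedDeriv_succ, iteratedDeriv_eq_iterate]
  exact (hf.iterated_deriv n).differentiableAt.hasDerivAt

theorem HasDerivAt.mul_div_half_mul_add_sq {A B U : 𝕜 → 𝕜} {A' B' U' x : 𝕜}
    (hA : HasDerivAt A A' x) (hB : HasDerivAt B B' x) (hU : HasDerivAt U U' x)
    (hden : 1 / 2 * B x * U x + A x ^ 2 ≠ 0) :
    HasDerivAt (fun y => A y * U y / (1 / 2 * B y * U y + A y ^ 2))
      (((A' * U x + A x * U') * (1 / 2 * B x * U x + A x ^ 2) -
          A x * U x * (1 / 2 * B' * U x + 1 / 2 * B x * U' + 2 * A x * A')) /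
        (1 / 2 * B x * U x + A x ^ 2) ^ 2) x := by
  refine ((hA.mul hU).div (((hB.const_mul (1 / 2)).mul hU).add (hA.pow 2)) hden).congr_deriv ?_
  simp only [Pi.mul_apply, Pi.add_apply, Pi.pow_apply, Nat.cast_ofNat]
  ring

end

theorem tamanoi_deriv_sub_deriv {K : Type*} [Field K] [CharZero K] {a b c p u : K} (ha : a ≠ 0)
    (hden : 1 / 2 * b * u + a ^ 2 ≠ 0) :
    ((b * u + a * (p - a)) * (1 / 2 * b * u + a ^ 2) -
          a * u * (1 / 2 * c * u + 1 / 2 * b * (p - a) + 2 * a * b)) /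
        (1 / 2 * b * u + a ^ 2) ^ 2 -
      ((0 * u + a * p) * (1 / 2 * b * u + a ^ 2) -
          a * u * (1 / 2 * 0 * u + 1 / 2 * b * p + 2 * a * 0)) /
        (1 / 2 * b * u + a ^ 2) ^ 2 =
      -1 - 1 / 2 * (c / a - 3 / 2 * (b / a) ^ 2) * (a * u / (1 / 2 * b * u + a ^ 2)) ^ 2 := by
  rw [div_sub_div_same, div_eq_iff (pow_ne_zero 2 hden), sub_mul, div_pow, div_pow,
    ← mul_div_assoc, div_mul_cancel₀ _ (pow_ne_zero 2 hden)]
  field_simp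
  ring

/-- For `V(z,w) = N_z(f(z+w))` one has `∂_z V - ∂_w V = -1 - (1/2) S_f(z) V^2`. -/
theorem partial_deriv_tamanoiV (D : Set ℂ) (hD : IsOpen D) (f : ℂ → ℂ)
    (hf : DifferentiableOn ℂ f D) (hf' : ∀ z ∈ D, deriv f z ≠ 0)
    (z w : ℂ) (hz : z ∈ D) (hzw : z + w ∈ D)
    (hden : (1 / 2) * iteratedDeriv 2 f z * (f (z + w) - f z) + (deriv f z) ^ 2 ≠ 0) :
    deriv (fun ζ => tamanoiN f ζ (f (ζ + w))) z -
        deriv (fun ω => tamanoiN f z (f (z + ω))) w =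
      -1 - (1 / 2) * schwarzianDeriv f z * (tamanoiN f z (f (z + w))) ^ 2 := by
  have hfz : AnalyticAt ℂ f z := hf.analyticAt (hD.mem_nhds hz)
  have hfzw : HasDerivAt f (deriv f (z + w)) (z + w) :=
    (hf.differentiableAt (hD.mem_nhds hzw)).hasDerivAt
  have hf1 : HasDerivAt (deriv f) (iteratedDeriv 2 f z) z := by
    simpa only [iteratedDeriv_one] using hfz.hasDerivAt_iteratedDeriv 1
  have hVz : HasDerivAt (fun ζ => tamanoiN f ζ (f (ζ + w))) _ z :=
    hf1.mul_div_half_mul_add_sq (hfz.hasDerivAt_iteratedDeriv 2)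
      ((hfzw.comp_add_const z w).sub hfz.differentiableAt.hasDerivAt) hden
  have hVw : HasDerivAt (fun ω => tamanoiN f z (f (z + ω))) _ w :=
    (hasDerivAt_const w (deriv f z)).mul_div_half_mul_add_sq
      (hasDerivAt_const w (iteratedDeriv 2 f z)) ((hfzw.comp_const_add z w).sub_const (f z)) hden
  rw [hVz.deriv, hVw.deriv]
  exact tamanoi_deriv_sub_deriv (hf' z hz) hden
end

section
/- For every n ≥ 0 and every α ∈ ℂ, the polynomial P_n satisfies P_n(α x_1, α² x_2, …, αⁿ x_n) = αⁿ P_n(x_1, x_2, …, x_n) as an identity of functions on ℂⁿ. -/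
open MvPolynomial

/-- The derivation `𝓔P = ∑_{m ≥ 1} (x_{m+1} - x_1 x_m) ∂P/∂x_m`. -/
noncomputable def Ederiv (P : MvPolynomial ℕ ℚ) : MvPolynomial ℕ ℚ :=
  ∑ m ∈ P.vars.erase 0, (X (m + 1) - X 1 * X m) * pderiv m P

lemma eval_scale {Q : MvPolynomial ℕ ℚ} {n : ℕ}
    (hQ : Q.IsWeightedHomogeneous (id : ℕ → ℕ) n) (α : ℂ) (x : ℕ → ℂ) :
    MvPolynomial.aeval (fun i => α ^ i * x i) Q = α ^ n * MvPolynomial.aeval x Q := by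
  rw [aeval_def, aeval_def, eval₂_eq, eval₂_eq, Finset.mul_sum]
  apply Finset.sum_congr rfl
  intro d hd
  have hw : (Finsupp.weight (id : ℕ → ℕ)) d = n := hQ (MvPolynomial.mem_support_iff.mp hd)
  have hn : ∑ i ∈ d.support, i * d i = n := by
    rw [← hw, Finsupp.weight_apply, Finsupp.sum]
    exact Finset.sum_congr rfl fun i _ => by simp [mul_comm]
  have : ∏ i ∈ d.support, (α ^ i * x i) ^ d i
      = α ^ n * ∏ i ∈ d.support, x i ^ d i := by
    rw [← hn, ← Finset.prod_pow_eq_pow_sum, ← Finset.prod_mul_distrib]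
    exact Finset.prod_congr rfl fun i _ => by rw [mul_pow, ← pow_mul]
  rw [this]; ring

lemma weight_single_one (m : ℕ) :
    (Finsupp.weight (id : ℕ → ℕ)) (Finsupp.single m 1) = m := by
  rw [Finsupp.weight_apply, Finsupp.sum_single_index] <;> simp

lemma pderiv_WH {Q : MvPolynomial ℕ ℚ} {n m : ℕ}
    (hQ : Q.IsWeightedHomogeneous (id : ℕ → ℕ) n) (hm : m ≤ n) :
    (pderiv m Q).IsWeightedHomogeneous (id : ℕ → ℕ) (n - m) := by
  classical
  conv_lhs => rw [← Q.support_sum_monomial_coeff, map_sum]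
  apply IsWeightedHomogeneous.sum
  intro d hd
  rw [pderiv_monomial]
  by_cases h0 : d m = 0
  · rw [h0]
    norm_num
    exact isWeightedHomogeneous_zero _ _ _
  · apply isWeightedHomogeneous_monomial
    have hle : Finsupp.single m 1 ≤ d := Finsupp.single_le_iff.mpr (Nat.one_le_iff_ne_zero.mpr h0)
    have hadd : (d - Finsupp.single m 1) + Finsupp.single m 1 = d := tsub_add_cancel_of_le hle
    have hwd : (Finsupp.weight (id : ℕ → ℕ)) d = n := hQ (MvPolynomial.mem_support_iff.mp hd)
    have := congrArg (Finsupp.weight (id : ℕ → ℕ)) hadd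
    rw [map_add, weight_single_one, hwd] at this
    omega

lemma pderiv_zero_of_gt {Q : MvPolynomial ℕ ℚ} {n m : ℕ}
    (hQ : Q.IsWeightedHomogeneous (id : ℕ → ℕ) n) (hm : n < m) :
    pderiv m Q = 0 := by
  classical
  conv_lhs => rw [← Q.support_sum_monomial_coeff, map_sum]
  apply Finset.sum_eq_zero
  intro d hd
  rw [pderiv_monomial]
  have h0 : d m = 0 := by
    by_contra h0
    have hmem : m ∈ d.support := Finsupp.mem_support_iff.mpr h0
    have hwd : (Finsupp.weight (id : ℕ → ℕ)) d = n := hQ (MvPolynomial.mem_support_iff.mp hd)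
    have : d m • (id m) ≤ ∑ i ∈ d.support, d i • (id i) :=
      Finset.single_le_sum (f := fun i => d i • (id i)) (fun i _ => Nat.zero_le _) hmem
    rw [Finsupp.weight_apply, Finsupp.sum] at hwd
    simp only [id_eq, smul_eq_mul] at this hwd
    have : m ≤ d m * m := Nat.le_mul_of_pos_left _ (Nat.pos_of_ne_zero h0)
    omega
  rw [h0]
  norm_num

lemma Ederiv_WH {Q : MvPolynomial ℕ ℚ} {n : ℕ}
    (hQ : Q.IsWeightedHomogeneous (id : ℕ → ℕ) n) :
    (Ederiv Q).IsWeightedHomogeneous (id : ℕ → ℕ) (n + 1) := by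
  apply IsWeightedHomogeneous.sum
  intro m _
  have h2 : IsWeightedHomogeneous (id : ℕ → ℕ) (X 1 * X m : MvPolynomial ℕ ℚ) (m + 1) := by
    have := (isWeightedHomogeneous_X ℚ (id : ℕ → ℕ) 1).mul (isWeightedHomogeneous_X ℚ (id : ℕ → ℕ) m)
    rwa [show (id 1 + id m : ℕ) = m + 1 by simp [Nat.add_comm]] at this
  have h1 : IsWeightedHomogeneous (id : ℕ → ℕ) (X (m + 1) - X 1 * X m : MvPolynomial ℕ ℚ) (m + 1) := by
    rw [← mem_weightedHomogeneousSubmodule]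
    exact Submodule.sub_mem _ (isWeightedHomogeneous_X ℚ (id : ℕ → ℕ) (m + 1)) h2
  by_cases hm : m ≤ n
  · have := h1.mul (pderiv_WH hQ hm)
    rwa [show (m + 1) + (n - m) = n + 1 by omega] at this
  · rw [pderiv_zero_of_gt hQ (by omega), mul_zero]
    exact isWeightedHomogeneous_zero _ _ _

lemma tamP_WH (P : ℕ → MvPolynomial ℕ ℚ)
    (hP0 : P 0 = 1) (hP1 : P 1 = 0)
    (hP2 : P 2 = X 2 - C (3 / 2 : ℚ) * X 1 ^ 2)
    (hPrec : ∀ n, 3 ≤ n → P n = Ederiv (P (n - 1)) +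
      C (1 / 2 : ℚ) * P 2 *
        ∑ k ∈ Finset.Icc 1 (n - 1), C (n.choose k : ℚ) * P (k - 1) * P (n - k - 1)) :
    ∀ n, (P n).IsWeightedHomogeneous (id : ℕ → ℕ) n := by
  have hW2 : (P 2).IsWeightedHomogeneous (id : ℕ → ℕ) 2 := by
    rw [hP2, ← mem_weightedHomogeneousSubmodule]
    apply Submodule.sub_mem
    · exact isWeightedHomogeneous_X ℚ (id : ℕ → ℕ) 2
    · have hx : IsWeightedHomogeneous (id : ℕ → ℕ) (X 1 ^ 2 : MvPolynomial ℕ ℚ) 2 := by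
        have := (isWeightedHomogeneous_X ℚ (id : ℕ → ℕ) 1).mul (isWeightedHomogeneous_X ℚ (id : ℕ → ℕ) 1)
        rwa [← pow_two] at this
      have := (isWeightedHomogeneous_C (id : ℕ → ℕ) (3 / 2 : ℚ)).mul hx
      rwa [zero_add] at this
  intro n
  induction n using Nat.strong_induction_on with
  | _ n ih =>
    match n, ih with
    | 0, _ => rw [hP0]; exact isWeightedHomogeneous_one ℚ _
    | 1, _ => rw [hP1]; exact isWeightedHomogeneous_zero ℚ _ _
    | 2, _ => exact hW2
    | (k + 3), ih =>
      set n := k + 3 with hn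
      rw [hPrec n (by omega), ← mem_weightedHomogeneousSubmodule]
      apply Submodule.add_mem
      · have := Ederiv_WH (ih (n - 1) (by omega))
        rwa [show n - 1 + 1 = n by omega] at this
      · have hsum : (∑ j ∈ Finset.Icc 1 (n - 1),
            C (n.choose j : ℚ) * P (j - 1) * P (n - j - 1)).IsWeightedHomogeneous
            (id : ℕ → ℕ) (n - 2) := by
          apply IsWeightedHomogeneous.sum
          intro j hj
          rw [Finset.mem_Icc] at hj
          have h1 := (isWeightedHomogeneous_C (id : ℕ → ℕ) (n.choose j : ℚ)).mul
            (ih (j - 1) (by omega))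
          have h2 := h1.mul (ih (n - j - 1) (by omega))
          rwa [show 0 + (j - 1) + (n - j - 1) = n - 2 by omega] at h2
        have h3 := ((isWeightedHomogeneous_C (id : ℕ → ℕ) (1 / 2 : ℚ)).mul hW2).mul hsum
        rwa [show 0 + 2 + (n - 2) = n by omega] at h3

/-- Homogeneity of the polynomials `P_n`:
`P_n(α x_1, α² x_2, …, αⁿ x_n) = αⁿ P_n(x_1, …, x_n)` for all `α ∈ ℂ`. -/
theorem tamP_homogeneous (P : ℕ → MvPolynomial ℕ ℚ)
    (hP0 : P 0 = 1) (hP1 : P 1 = 0)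
    (hP2 : P 2 = X 2 - C (3 / 2 : ℚ) * X 1 ^ 2)
    (hPrec : ∀ n, 3 ≤ n → P n = Ederiv (P (n - 1)) +
      C (1 / 2 : ℚ) * P 2 *
        ∑ k ∈ Finset.Icc 1 (n - 1), C (n.choose k : ℚ) * P (k - 1) * P (n - k - 1))
    (n : ℕ) (α : ℂ) (x : ℕ → ℂ) :
    MvPolynomial.aeval (fun i => α ^ i * x i) (P n) =
      α ^ n * MvPolynomial.aeval x (P n) := by
  exact eval_scale (tamP_WH P hP0 hP1 hP2 hPrec n) α x
end
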